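/- arXiv:math/0603455 — 2 statements merged into one kernel-verified Lean document; each statement's English description precedes it below -/
import Mathlib

section
/- Let G be a finite group, X a topological space with trivial G-action (or more generally any G-space), S a finite set with discrete topology and trivial G-action, and α : S → X/G a continuous map where X/G carries the quotient topology from the G-action on X. Then the pullback p(S) of α along the quotient map π : X → X/G, taken in the category of G-spaces, is a finite G-set (i.e., a finite discrete space with continuous G-action) satisfying p(S)/G ≅ S. -/
/-- The orbit-space quotient of a `G`-space `X`. -/
abbrev orbitQuot (G X : Type*) [Group G] [MulAction G X] :=
  Quotient (MulAction.orbitRel G X)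

/-- The pullback of `α : S → X/G` along the quotient map `π : X → X/G`,
with `G` acting on the second coordinate. -/
def pullbackOfQuot {G X : Type*} [Group G] [MulAction G X] (S : Type*)
    (α : S → orbitQuot G X) : Type _ :=
  {p : S × X // α p.1 = Quotient.mk (MulAction.orbitRel G X) p.2}

instance {G X : Type*} [Group G] [MulAction G X] (S : Type*)
    (α : S → orbitQuot G X) : MulAction G (pullbackOfQuot S α) where
  smul g p := ⟨(p.1.1, g • p.1.2), by
    rcases p with ⟨⟨s, x⟩, h⟩
    exact h.trans (Quotient.sound (MulAction.orbitRel_apply.mpr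
      (MulAction.mem_orbit x g))).symm⟩
  one_smul p := Subtype.ext (Prod.ext rfl (one_smul G _))
  mul_smul g h p := Subtype.ext (Prod.ext rfl (mul_smul g h _))

namespace pullbackOfQuot

variable {G X S : Type*} [Group G] [MulAction G X] {α : S → orbitQuot G X}

theorem fst_surjective : Function.Surjective fun p : pullbackOfQuot S α => p.1.1 :=
  fun s => ⟨⟨(s, (α s).out), (Quotient.out_eq _).symm⟩, rfl⟩

theorem orbitRel_iff (p q : pullbackOfQuot S α) :
    MulAction.orbitRel G (pullbackOfQuot S α) p q ↔ p.1.1 = q.1.1 := by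
  constructor
  · rintro ⟨g, rfl⟩
    rfl
  · intro h
    have hx : Quotient.mk (MulAction.orbitRel G X) p.1.2
        = Quotient.mk (MulAction.orbitRel G X) q.1.2 := by
      rw [← p.2, ← q.2, h]
    obtain ⟨g, hg⟩ := Quotient.exact hx
    exact ⟨g, Subtype.ext (Prod.ext h.symm hg)⟩

variable (α) in
noncomputable def orbitEquiv : Quotient (MulAction.orbitRel G (pullbackOfQuot S α)) ≃ S :=
  (Quotient.congrRight orbitRel_iff).trans (Setoid.quotientKerEquivOfSurjective _ fst_surjective)

theorem orbitEquiv_mk (p : pullbackOfQuot S α) : orbitEquiv α ⟦p⟧ = p.1.1 :=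
  rfl

end pullbackOfQuot

theorem pullback_finite_and_quotient_equiv_general
    (G : Type*) [Group G] [Finite G]
    (X : Type*) [MulAction G X]
    (S : Type*) [Finite S]
    (α : S → orbitQuot G X) :
    Finite (pullbackOfQuot S α) ∧
      ∃ e : Quotient (MulAction.orbitRel G (pullbackOfQuot S α)) ≃ S,
        ∀ p : pullbackOfQuot S α, e ⟦p⟧ = p.1.1 := by
  have : Finite (MulAction.orbitRel.Quotient G (pullbackOfQuot S α)) :=
    .of_equiv S (pullbackOfQuot.orbitEquiv α).symm
  exact ⟨.of_finite_mulAction_orbitRel_quotient G _, pullbackOfQuot.orbitEquiv α,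
    pullbackOfQuot.orbitEquiv_mk⟩

/-- For a finite group `G`, a `G`-space `X` with continuous action,
a finite (discrete) set `S` and a continuous map `α : S → X/G`, the pullback of `α`
along the quotient map `π : X → X/G` in `G`-spaces is a finite `G`-set whose orbit
space is isomorphic to `S` via the first projection. -/
theorem pullback_finite_and_quotient_equiv
    (G : Type*) [Group G] [Finite G]
    (X : Type*) [TopologicalSpace X] [MulAction G X]
    (hcont : ∀ g : G, Continuous fun x : X => g • x)
    (S : Type*) [Finite S] [TopologicalSpace S] [DiscreteTopology S]
    (α : S → orbitQuot G X) (hα : Continuous α) :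
    Finite (pullbackOfQuot S α) ∧
      ∃ e : Quotient (MulAction.orbitRel G (pullbackOfQuot S α)) ≃ S,
        ∀ p : pullbackOfQuot S α, e ⟦p⟧ = p.1.1 :=
  pullback_finite_and_quotient_equiv_general G X S α
end

section
/- Let G be a finite group acting on a simplicial set K (i.e., K is a simplicial object in G-sets), and let H ≤ G. Then the geometric realization of the fixed-point simplicial set K^H is naturally homeomorphic to the H-fixed points of the geometric realization |K|: |K^H| ≅ |K|^H. -/
open CategoryTheory

variable {G : Type} [Group G]

/-- The fixed-point simplicial set `K^H` of a simplicial `G`-set `K`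
(a `G`-action on a simplicial set, i.e. an object of `Action SSet G`). -/
def fixedSSet (K : Action SSet (MonCat.of G)) (H : Subgroup G) : SSet where
  obj n := {x : K.V.obj n // ∀ h : H, (K.ρ (h : G)).app n x = x}
  map f := TypeCat.ofHom fun x => ⟨K.V.map f x.1, by
    intro h
    have := ConcreteCategory.congr_hom ((K.ρ (h : G)).naturality f) x.1
    dsimp at this
    rw [this, x.2 h]⟩
  map_id := fun n => by
    ext x; simpa using Functor.map_id_apply K.V _ x.1
  map_comp := fun f g => by
    ext x; simpa using Functor.map_comp_apply K.V f g x.1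

/-- The `H`-fixed points of the geometric realization `|K|`,
for the `G`-action induced functorially on the realization. -/
def fixedRealization (K : Action SSet (MonCat.of G)) (H : Subgroup G) : Type :=
  {x : SSet.toTop.obj K.V // ∀ h : H, (SSet.toTop.map (K.ρ (h : G))) x = x}

noncomputable instance (K : Action SSet (MonCat.of G)) (H : Subgroup G) :
    TopologicalSpace (fixedRealization K H) :=
  instTopologicalSpaceSubtype


/-!
Every point of a realization `|P|` is `simplexMap x t` for a unique nondegenerate simplex `x` and
a unique point `t` in the interior of its simplex: write `t` as an interior point of a face `d`
and take the Eilenberg–Zilber decomposition of `d^* x`; this normal form is invariant under the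
identifications defining `|P|`, hence descends to `|P|`. For a simplicial subset `A ⊆ P` the map
`|A| → |P|` is therefore injective, and it is closed: over each simplex of `P` the image of a
closed set is a finite union, over the faces lying in `A`, of compact sets.

A group element acts on `K` by an automorphism, which preserves nondegenerate simplices and
interior points, hence normal forms. So a point of `|K|` is `H`-fixed exactly when its
nondegenerate simplex lies in `K^H`, and `|K^H| → |K|` is a closed embedding onto `|K|^H`.
-/

open CategoryTheory Limits Opposite Simplicial

universe u

namespace stdSimplex

variable {S : Type*} [Semiring S] [PartialOrder S] [IsOrderedRing S]
  {X Y : Type*} [Fintype X] [Fintype Y]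

lemma map_apply [DecidableEq Y] (f : X → Y) (s : stdSimplex S X) (y : Y) :
    map f s y = ∑ x with f x = y, s x :=
  FunOnFinite.linearMap_apply_apply _ _ _ _ _

lemma map_apply_of_injective {f : X → Y} (hf : f.Injective) (s : stdSimplex S X) (x : X) :
    map f s (f x) = s x := by
  classical
  rw [map_apply, Finset.sum_eq_single_of_mem x (by simp)]
  intro x' hx' hne
  exact absurd (hf (Finset.mem_filter.mp hx').2) hne

lemma map_apply_eq_zero {f : X → Y} {y : Y} (hy : y ∉ Set.range f) (s : stdSimplex S X) :
    map f s y = 0 := by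
  classical
  rw [map_apply, Finset.sum_eq_zero]
  intro x hx
  exact absurd ⟨x, (Finset.mem_filter.mp hx).2⟩ hy

lemma map_apply_pos {f : X → Y} (hf : f.Surjective) {s : stdSimplex S X} (hs : ∀ x, 0 < s x)
    (y : Y) : 0 < map f s y := by
  classical
  obtain ⟨x, rfl⟩ := hf y
  rw [map_apply]
  exact (hs x).trans_le (Finset.single_le_sum (fun x _ => zero_le s x) (by simp))

end stdSimplex

namespace SimplexCategory

variable {S : Type*} [Semiring S] [PartialOrder S] [IsOrderedRing S] {n : ℕ}

lemma stdSimplex_map_comp_apply {k m : ℕ} (f : ⦋k⦌ ⟶ ⦋m⦌) (g : ⦋m⦌ ⟶ ⦋n⦌)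
    (s : stdSimplex S (Fin (k + 1))) :
    stdSimplex.map (f ≫ g) s = stdSimplex.map g (stdSimplex.map f s) :=
  (stdSimplex.map_comp_apply (S := S) f g s).symm

lemma range_eq_of_mono_map_eq {m : ℕ} {d : ⦋m⦌ ⟶ ⦋n⦌} [Mono d] {s : stdSimplex S (Fin (m + 1))}
    (hs : ∀ j, 0 < s j) {t : stdSimplex S (Fin (n + 1))} (ht : stdSimplex.map d s = t) :
    Set.range d = {i | t i ≠ 0} := by
  have hd : Function.Injective d := mono_iff_injective.mp inferInstance
  ext i
  refine ⟨?_, fun hi => by_contra fun hni => hi (ht ▸ stdSimplex.map_apply_eq_zero hni s)⟩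
  rintro ⟨j, rfl⟩
  rw [Set.mem_ofPred_eq, ← ht, stdSimplex.map_apply_of_injective hd]
  exact (hs j).ne'

lemma sigma_eq_of_mono_map_eq {m m' : ℕ} {d : ⦋m⦌ ⟶ ⦋n⦌} {d' : ⦋m'⦌ ⟶ ⦋n⦌} [Mono d] [Mono d']
    {s : stdSimplex S (Fin (m + 1))} {s' : stdSimplex S (Fin (m' + 1))}
    (hs : ∀ j, 0 < s j) (hs' : ∀ j, 0 < s' j) (h : stdSimplex.map d s = stdSimplex.map d' s') :
    (⟨m, d, s⟩ : Σ m, (⦋m⦌ ⟶ ⦋n⦌) × stdSimplex S (Fin (m + 1))) = ⟨m', d', s'⟩ := by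
  have hrange : Set.range d = Set.range d' :=
    (range_eq_of_mono_map_eq hs h).trans (range_eq_of_mono_map_eq hs' rfl).symm
  have hd : Function.Injective d := mono_iff_injective.mp inferInstance
  have hd' : Function.Injective d' := mono_iff_injective.mp inferInstance
  obtain rfl : m = m' := by
    have := Nat.card_range_of_injective hd
    rw [hrange, Nat.card_range_of_injective hd'] at this
    simpa using this.symm
  obtain rfl : d = d' := Hom.ext _ _ <| OrderHom.ext _ _ <|
    ((d.toOrderHom.monotone.strictMono_of_injective hd).range_inj
      (d'.toOrderHom.monotone.strictMono_of_injective hd')).mp hrange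
  obtain rfl : s = s' := stdSimplex.ext <| funext fun j => by
    rw [← stdSimplex.map_apply_of_injective hd s j, h, stdSimplex.map_apply_of_injective hd s' j]
  rfl

lemma exists_epi_of_map_eq_map_of_mono {m m' : ℕ} (d : ⦋m⦌ ⟶ ⦋n⦌) (i : ⦋m'⦌ ⟶ ⦋n⦌) [Mono i]
    {s : stdSimplex S (Fin (m + 1))} {u : stdSimplex S (Fin (m' + 1))} (hs : ∀ j, 0 < s j)
    (hu : ∀ j, 0 < u j) (h : stdSimplex.map d s = stdSimplex.map i u) :
    ∃ e : ⦋m⦌ ⟶ ⦋m'⦌, Epi e ∧ e ≫ i = d ∧ stdSimplex.map e s = u := by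
  obtain ⟨m₀, e, i₀, _, _, rfl⟩ : ∃ (m₀ : ℕ) (e : ⦋m⦌ ⟶ ⦋m₀⦌) (i₀ : ⦋m₀⦌ ⟶ ⦋n⦌),
      Epi e ∧ Mono i₀ ∧ e ≫ i₀ = d :=
    ⟨_, factorThruImage d, image.ι d, inferInstance, inferInstance, image.fac d⟩
  rw [stdSimplex_map_comp_apply] at h
  cases sigma_eq_of_mono_map_eq (stdSimplex.map_apply_pos (epi_iff_surjective.mp ‹_›) hs) hu h
  exact ⟨e, ‹_›, rfl, rfl⟩

variable [Nontrivial S]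

lemma exists_mono_map_eq (t : stdSimplex S (Fin (n + 1))) :
    ∃ (m : ℕ) (d : ⦋m⦌ ⟶ ⦋n⦌) (s : stdSimplex S (Fin (m + 1))),
      Mono d ∧ (∀ j, 0 < s j) ∧ stdSimplex.map d s = t := by
  classical
  set supp : Finset (Fin (n + 1)) := {i | t i ≠ 0}
  have hsum : ∑ i ∈ supp, t i = 1 := by rw [Finset.sum_filter_ne_zero, stdSimplex.sum_eq_one]
  have hcard : supp.card = supp.card - 1 + 1 := by
    refine (Nat.succ_pred_eq_of_ne_zero fun h => ?_).symm
    simp [Finset.card_eq_zero.mp h] at hsum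
  set e := supp.orderEmbOfFin hcard
  have he : Set.range e = supp := Finset.range_orderEmbOfFin _ _
  have hpos (j) : 0 < t (e j) :=
    (stdSimplex.zero_le t _).lt_of_ne
      (Finset.mem_filter.mp (he ▸ Set.mem_range_self j)).2.symm
  let s : stdSimplex S (Fin (supp.card - 1 + 1)) := ⟨fun j => t (e j), fun j => (hpos j).le, by
    rw [← hsum, ← Finset.sum_image (fun a _ b _ h => e.injective h)]
    congr 1
    simpa [← Finset.coe_inj] using he⟩
  refine ⟨_, mkHom e.toOrderHom, s, mono_iff_injective.mpr e.injective, hpos, ?_⟩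
  ext i
  by_cases hi : i ∈ Set.range e
  · obtain ⟨j, rfl⟩ := hi
    exact stdSimplex.map_apply_of_injective e.injective s j
  · refine (stdSimplex.map_apply_eq_zero hi s).trans ?_
    rw [he] at hi
    simpa [supp, eq_comm] using hi

end SimplexCategory

namespace SSet

local notation "Δₜ[" n "]" => _root_.stdSimplex ℝ (Fin (n + 1))

variable (P : SSet.{u})

noncomputable def simplexMap {n : ℕ} (x : P _⦋n⦌) : C(Δₜ[n], |P|) :=
  TopCat.toSSetObjEquiv _ _ ((sSetTopAdj.unit.app P).app _ x)

variable {P}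

lemma simplexMap_map {m n : ℕ} (f : ⦋m⦌ ⟶ ⦋n⦌) (x : P _⦋n⦌) (z : Δₜ[m]) :
    P.simplexMap (P.map f.op x) z = P.simplexMap x (_root_.stdSimplex.map f z) := by
  have := ConcreteCategory.congr_hom ((sSetTopAdj.unit.app P).naturality f.op) x
  simp only [simplexMap]
  erw [this]
  rfl

lemma toTop_map_simplexMap {Q : SSet.{u}} (g : P ⟶ Q) {n : ℕ} (x : P _⦋n⦌) (z : Δₜ[n]) :
    toTop.map g (P.simplexMap x z) = Q.simplexMap (g.app _ x) z := by
  have := ConcreteCategory.congr_hom (congr_app (sSetTopAdj.unit.naturality g) (op ⦋n⦌)) x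
  simp only [simplexMap]
  erw [this]
  rfl

/-- `stdSimplex` is declared as a `CosimplicialObject`, and with that type instance search does not
find the category structure on `CostructuredArrow stdSimplex P`. -/
abbrev stdSimplexFunctor : SimplexCategory ⥤ SSet.{u} := stdSimplex

variable (P) in
noncomputable def realizationCocone :
    Cocone (CostructuredArrow.proj stdSimplexFunctor P ⋙ SimplexCategory.toTop) :=
  (Functor.LeftExtension.mk toTop toTopSimplex.inv).coconeAt P

variable (P) in
noncomputable def isColimitRealizationCocone : IsColimit (realizationCocone P) :=
  Functor.isPointwiseLeftKanExtensionOfIsLeftKanExtension toTop toTopSimplex.inv P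

lemma realizationCocone_ι_app_apply (j : CostructuredArrow stdSimplexFunctor.{u} P)
    (t : SimplexCategory.toTop.{u}.obj j.left) :
    (realizationCocone P).ι.app j t =
      P.simplexMap (n := j.left.len) (yonedaEquiv j.hom) t.down := by
  have := sSetTopAdj_unit_app_app_down P (op j.left) (yonedaEquiv j.hom)
  rw [Equiv.symm_apply_apply] at this
  change _ =
    ConcreteCategory.hom ((sSetTopAdj.unit.app P).app (op j.left) (yonedaEquiv j.hom)).down t
  rw [this]
  rfl

lemma exists_simplexMap_eq (z : |P|) :
    ∃ (n : ℕ) (x : P _⦋n⦌) (t : Δₜ[n]), P.simplexMap x t = z := by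
  obtain ⟨j, t, rfl⟩ := Types.jointly_surjective_of_isColimit
    (isColimitOfPreserves (forget TopCat) (isColimitRealizationCocone P)) z
  exact ⟨_, _, _, (realizationCocone_ι_app_apply j t).symm⟩

lemma isClosed_iff_isClosed_preimage_simplexMap {F : Set |P|} :
    IsClosed F ↔ ∀ (n : ℕ) (x : P _⦋n⦌), IsClosed (P.simplexMap x ⁻¹' F) := by
  refine ⟨fun hF n x => hF.preimage (map_continuous _), fun h => ?_⟩
  refine (TopCat.isClosed_iff_of_isColimit _ (isColimitRealizationCocone P) F).2 fun j => ?_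
  have : (realizationCocone P).ι.app j ⁻¹' F =
      ULift.down ⁻¹' (P.simplexMap (n := j.left.len) (yonedaEquiv j.hom) ⁻¹' F) := by
    ext t
    exact iff_of_eq (congrArg (· ∈ F) (realizationCocone_ι_app_apply j t))
  rw [this]
  exact (h _ _).preimage continuous_uliftDown

lemma exists_comp_simplexMap_eq {α : Type*} (f : ∀ n : ℕ, P _⦋n⦌ → Δₜ[n] → α)
    (hf : ∀ (m n : ℕ) (g : ⦋m⦌ ⟶ ⦋n⦌) (x : P _⦋n⦌) (z : Δₜ[m]),
      f m (P.map g.op x) z = f n x (_root_.stdSimplex.map g z)) :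
    ∃ F : |P| → α, ∀ n x z, F (P.simplexMap x z) = f n x z := by
  have hc := (Types.isColimit_iff_coconeTypesIsColimit _).1
    ⟨isColimitOfPreserves (forget TopCat) (isColimitRealizationCocone P)⟩
  let c : Functor.CoconeTypes
      (CostructuredArrow.proj stdSimplexFunctor P ⋙ SimplexCategory.toTop ⋙ forget TopCat) :=
    { pt := α
      ι j t := f _ (yonedaEquiv j.hom) t.down
      ι_naturality {j j'} φ := by
        ext t
        have hx : P.map φ.left.op (yonedaEquiv j'.hom) = yonedaEquiv j.hom :=
          (yonedaEquiv_naturality _ _).trans (congrArg yonedaEquiv (CostructuredArrow.w φ))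
        exact (hf _ _ φ.left _ t.down).symm.trans (by rw [hx]) }
  refine ⟨hc.desc c, fun n x z => ?_⟩
  have h := realizationCocone_ι_app_apply (CostructuredArrow.mk (yonedaEquiv.symm x)) ⟨z⟩
  simp only [CostructuredArrow.mk_hom_eq_self, Equiv.apply_symm_apply] at h
  rw [← h]
  exact (hc.fac_apply c _ _).trans (by simp [c])

lemma sigma_eq_of_nonDegenerate {n k k' : ℕ} {σ : ⦋n⦌ ⟶ ⦋k⦌} {σ' : ⦋n⦌ ⟶ ⦋k'⦌} [Epi σ] [Epi σ']
    {y : P _⦋k⦌} {y' : P _⦋k'⦌} (hy : y ∈ P.nonDegenerate k) (hy' : y' ∈ P.nonDegenerate k')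
    (h : P.map σ.op y = P.map σ'.op y') :
    (⟨k, σ, y⟩ : Σ k, (⦋n⦌ ⟶ ⦋k⦌) × P _⦋k⦌) = ⟨k', σ', y'⟩ := by
  obtain rfl := P.unique_nonDegenerate_dim _ σ ⟨y, hy⟩ rfl σ' ⟨y', hy'⟩ h
  obtain rfl : y = y' :=
    congrArg Subtype.val (P.unique_nonDegenerate_simplex _ σ ⟨y, hy⟩ rfl σ' ⟨y', hy'⟩ h)
  obtain rfl := P.unique_nonDegenerate_map _ σ ⟨y, hy⟩ rfl σ' ⟨y, hy'⟩ h
  rfl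

variable (P) in
structure SimplexPoint : Type u where
  dim : ℕ
  simplex : P _⦋dim⦌
  point : Δₜ[dim]

namespace SimplexPoint

noncomputable def toRealization (p : P.SimplexPoint) : |P| := P.simplexMap p.simplex p.point

def IsNormal (p : P.SimplexPoint) : Prop := p.simplex ∈ P.nonDegenerate p.dim ∧ ∀ i, 0 < p.point i

/-- `q` is the normal form of `p`. The map `d` need not be mono, which makes `reducesTo_map`
immediate; `ReducesTo.eq_of_mono` reduces to the mono case. -/
inductive ReducesTo : P.SimplexPoint → P.SimplexPoint → Prop where
  | intro {n m k : ℕ} (x : P _⦋n⦌) (d : ⦋m⦌ ⟶ ⦋n⦌) (s : Δₜ[m])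
      (hs : ∀ j, 0 < s j) (σ : ⦋m⦌ ⟶ ⦋k⦌) [Epi σ] (y : P _⦋k⦌) (hy : y ∈ P.nonDegenerate k)
      (h : P.map d.op x = P.map σ.op y) :
      ReducesTo ⟨n, x, _root_.stdSimplex.map d s⟩ ⟨k, y, _root_.stdSimplex.map σ s⟩

lemma ReducesTo.isNormal {p q : P.SimplexPoint} (h : p.ReducesTo q) : q.IsNormal := by
  obtain ⟨x, d, s, hs, σ, y, hy, -⟩ := h
  exact ⟨hy, _root_.stdSimplex.map_apply_pos (SimplexCategory.epi_iff_surjective.mp ‹_›) hs⟩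

lemma ReducesTo.toRealization_eq {p q : P.SimplexPoint} (h : p.ReducesTo q) :
    q.toRealization = p.toRealization := by
  obtain ⟨x, d, s, hs, σ, y, hy, h⟩ := h
  simp only [toRealization, ← simplexMap_map, h]

lemma reducesTo_self {p : P.SimplexPoint} (hp : p.IsNormal) : p.ReducesTo p := by
  obtain ⟨n, x, t⟩ := p
  simpa using ReducesTo.intro x (𝟙 _) t hp.2 (𝟙 _) x hp.1 rfl

lemma reducesTo_map {m n : ℕ} (g : ⦋m⦌ ⟶ ⦋n⦌) (x : P _⦋n⦌)
    (z : Δₜ[m]) {q : P.SimplexPoint}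
    (h : ReducesTo ⟨m, P.map g.op x, z⟩ q) : ReducesTo ⟨n, x, _root_.stdSimplex.map g z⟩ q := by
  obtain ⟨_, d, s, hs, σ, y, hy, h⟩ := h
  have := ReducesTo.intro x (d ≫ g) s hs σ y hy (by rw [op_comp, Functor.map_comp_apply, h])
  rwa [SimplexCategory.stdSimplex_map_comp_apply] at this

lemma exists_reducesTo (p : P.SimplexPoint) : ∃ q, p.ReducesTo q := by
  obtain ⟨n, x, t⟩ := p
  obtain ⟨m, d, s, -, hs, rfl⟩ := SimplexCategory.exists_mono_map_eq t
  obtain ⟨k, σ, _, ⟨y, hy⟩, h⟩ := exists_nonDegenerate _ (P.map d.op x)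
  exact ⟨_, .intro x d s hs σ y hy h⟩

lemma ReducesTo.eq_of_mono {p q : P.SimplexPoint} (h : p.ReducesTo q) {m k : ℕ}
    (i : ⦋m⦌ ⟶ ⦋p.dim⦌) [Mono i] (u : Δₜ[m]) (hu : ∀ j, 0 < u j)
    (hiu : _root_.stdSimplex.map i u = p.point) (τ : ⦋m⦌ ⟶ ⦋k⦌) [Epi τ] (w : P _⦋k⦌)
    (hw : w ∈ P.nonDegenerate k) (hiw : P.map i.op p.simplex = P.map τ.op w) :
    q = ⟨k, w, _root_.stdSimplex.map τ u⟩ := by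
  obtain ⟨x, d, s, hs, σ, y, hy, h⟩ := h
  obtain ⟨e, _, hd, he⟩ := SimplexCategory.exists_epi_of_map_eq_map_of_mono d i hs hu hiu.symm
  have : P.map σ.op y = P.map (e ≫ τ).op w := by
    rw [← h, ← hd, op_comp, Functor.map_comp_apply, hiw, op_comp, Functor.map_comp_apply]
  cases sigma_eq_of_nonDegenerate hy hw this
  rw [SimplexCategory.stdSimplex_map_comp_apply, he]

lemma ReducesTo.unique {p q q' : P.SimplexPoint} (h : p.ReducesTo q) (h' : p.ReducesTo q') :
    q = q' := by
  obtain ⟨m, i, u, _, hu, hiu⟩ := SimplexCategory.exists_mono_map_eq p.point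
  obtain ⟨k, τ, _, ⟨w, hw⟩, hiw⟩ := exists_nonDegenerate _ (P.map i.op p.simplex)
  rw [h.eq_of_mono i u hu hiu τ w hw hiw, h'.eq_of_mono i u hu hiu τ w hw hiw]

lemma exists_isNormal_toRealization_eq (z : |P|) :
    ∃ p : P.SimplexPoint, p.IsNormal ∧ p.toRealization = z := by
  obtain ⟨n, x, t, rfl⟩ := exists_simplexMap_eq z
  obtain ⟨q, hq⟩ := exists_reducesTo ⟨n, x, t⟩
  exact ⟨q, hq.isNormal, hq.toRealization_eq⟩

lemma eq_of_isNormal_of_toRealization_eq {p q : P.SimplexPoint} (hp : p.IsNormal)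
    (hq : q.IsNormal) (h : p.toRealization = q.toRealization) : p = q := by
  choose nf hnf using exists_reducesTo (P := P)
  obtain ⟨F, hF⟩ := exists_comp_simplexMap_eq (fun n x z => nf ⟨n, x, z⟩)
    fun m n g x z => (reducesTo_map g x z (hnf _)).unique (hnf _)
  calc p = nf p := (reducesTo_self hp).unique (hnf p)
    _ = F p.toRealization := (hF _ _ _).symm
    _ = F q.toRealization := by rw [h]
    _ = nf q := hF _ _ _
    _ = q := (hnf q).unique (reducesTo_self hq)

variable {A : SSet.{u}}

def map (f : A ⟶ P) (p : A.SimplexPoint) : P.SimplexPoint := ⟨p.dim, f.app _ p.simplex, p.point⟩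

lemma toRealization_map (f : A ⟶ P) (p : A.SimplexPoint) :
    (p.map f).toRealization = toTop.map f p.toRealization :=
  (toTop_map_simplexMap f _ _).symm

lemma IsNormal.map {p : A.SimplexPoint} (hp : p.IsNormal) (f : A ⟶ P) [Mono f] :
    (p.map f).IsNormal :=
  ⟨(nonDegenerate_iff_of_mono f _).mpr hp.1, hp.2⟩

lemma map_injective (f : A ⟶ P) [Mono f] : Function.Injective (map f) := by
  rintro ⟨n, x, t⟩ ⟨n', x', t'⟩ h
  simp only [map, mk.injEq] at h
  obtain ⟨rfl, hx, rfl⟩ := h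
  rw [injective_of_mono (f.app _) (eq_of_heq hx)]

end SimplexPoint

open SimplexPoint

variable {A Q : SSet.{u}}

lemma app_eq_of_toTop_map_eq (f g : P ⟶ Q) [Mono f] [Mono g] {p : P.SimplexPoint}
    (hp : p.IsNormal) (h : toTop.map f p.toRealization = toTop.map g p.toRealization) :
    f.app _ p.simplex = g.app _ p.simplex := by
  rw [← toRealization_map, ← toRealization_map] at h
  simpa [SimplexPoint.map] using eq_of_isNormal_of_toRealization_eq (hp.map f) (hp.map g) h

lemma toTop_map_injective (i : A ⟶ P) [Mono i] : Function.Injective (toTop.map i) := by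
  intro z z' h
  obtain ⟨p, hp, rfl⟩ := exists_isNormal_toRealization_eq z
  obtain ⟨p', hp', rfl⟩ := exists_isNormal_toRealization_eq z'
  rw [← toRealization_map, ← toRealization_map] at h
  rw [map_injective i (eq_of_isNormal_of_toRealization_eq (hp.map i) (hp'.map i) h)]

lemma exists_app_eq_of_simplexMap_mem_range (i : A ⟶ P) [Mono i] {n : ℕ} (x : P _⦋n⦌)
    {s : Δₜ[n]} (hs : ∀ j, 0 < s j)
    (h : P.simplexMap x s ∈ Set.range (toTop.map i)) : ∃ a, i.app _ a = x := by
  obtain ⟨k, σ, _, ⟨y, hy⟩, rfl⟩ := exists_nonDegenerate _ x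
  obtain ⟨z, hz⟩ := h
  obtain ⟨p, hp, rfl⟩ := exists_isNormal_toRealization_eq z
  rw [← toRealization_map, simplexMap_map] at hz
  have hq : (⟨k, y, _root_.stdSimplex.map σ s⟩ : P.SimplexPoint).IsNormal :=
    ⟨hy, _root_.stdSimplex.map_apply_pos (SimplexCategory.epi_iff_surjective.mp ‹_›) hs⟩
  obtain ⟨n, a, t⟩ := p
  have := eq_of_isNormal_of_toRealization_eq (hp.map i) hq hz
  simp only [SimplexPoint.map, mk.injEq] at this
  obtain ⟨rfl, ha, -⟩ := this
  exact ⟨A.map σ.op a, by rw [NatTrans.naturality_apply, eq_of_heq ha]⟩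

lemma preimage_simplexMap_image_toTop_map (i : A ⟶ P) [Mono i] {n : ℕ} (x : P _⦋n⦌)
    (F : Set |A|) :
    P.simplexMap x ⁻¹' (toTop.map i '' F) =
      ⋃ (d : Σ k : Fin (n + 1), ⦋k⦌ ⟶ ⦋n⦌), ⋃ a ∈ {a | i.app _ a = P.map d.2.op x},
        _root_.stdSimplex.map d.2 '' (A.simplexMap a ⁻¹' F) := by
  ext t
  simp only [Set.mem_preimage, Set.mem_image, Set.mem_iUnion, Set.mem_ofPred_eq, exists_prop]
  constructor
  · rintro ⟨z, hz, hzt⟩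
    obtain ⟨m, d, s, _, hs, rfl⟩ := SimplexCategory.exists_mono_map_eq t
    rw [← simplexMap_map] at hzt
    obtain ⟨a, ha⟩ := exists_app_eq_of_simplexMap_mem_range i _ hs ⟨z, hzt⟩
    refine ⟨⟨⟨m, Nat.lt_succ_of_le (SimplexCategory.len_le_of_mono d)⟩, d⟩, a, ha, s, ?_, rfl⟩
    rwa [toTop_map_injective i (by rw [toTop_map_simplexMap, ha, hzt] : 
      toTop.map i (A.simplexMap a s) = toTop.map i z)]
  · rintro ⟨⟨k, d⟩, a, ha, s, hs, rfl⟩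
    exact ⟨_, hs, by rw [toTop_map_simplexMap, ha, simplexMap_map]⟩

lemma isClosedMap_toTop_map (i : A ⟶ P) [Mono i] : IsClosedMap (toTop.map i) := by
  intro F hF
  refine isClosed_iff_isClosed_preimage_simplexMap.2 fun n x => ?_
  rw [preimage_simplexMap_image_toTop_map]
  refine isClosed_iUnion_of_finite fun d => Set.Finite.isClosed_biUnion ?_ fun a _ => ?_
  · exact Set.Subsingleton.finite fun a ha b hb => injective_of_mono (i.app _) (ha.trans hb.symm)
  · exact ((hF.preimage (map_continuous _)).isCompact.image
      (_root_.stdSimplex.continuous_map _)).isClosed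

lemma isClosedEmbedding_toTop_map (i : A ⟶ P) [Mono i] :
    Topology.IsClosedEmbedding (toTop.map i) :=
  .of_continuous_injective_isClosedMap (map_continuous _) (toTop_map_injective i)
    (isClosedMap_toTop_map i)

end SSet

instance Action.isIso_ρ {V : Type*} [Category V] {M : Type*} [Group M] (A : Action V M) (g : M) :
    IsIso (A.ρ g) :=
  (A.ρAut g).isIso_hom

namespace fixedSSet

variable (K : Action SSet (MonCat.of G)) (H : Subgroup G)

def ι : fixedSSet K H ⟶ K.V where
  app _ := TypeCat.ofHom Subtype.val
  naturality _ _ _ := rfl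

instance : Mono (ι K H) :=
  (NatTrans.mono_iff_mono_app _).2 fun _ => (mono_iff_injective _).2 Subtype.val_injective

lemma ι_comp_ρ (h : H) : ι K H ≫ K.ρ h = ι K H := by
  ext n x
  exact x.2 h

end fixedSSet

lemma range_toTop_map_fixedSSet_ι (K : Action SSet (MonCat.of G)) (H : Subgroup G) :
    Set.range (SSet.toTop.map (fixedSSet.ι K H)) =
      {u | ∀ h : H, SSet.toTop.map (K.ρ (h : G)) u = u} := by
  ext u
  constructor
  · rintro ⟨z, rfl⟩ h
    rw [← ConcreteCategory.comp_apply, ← Functor.map_comp, fixedSSet.ι_comp_ρ]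
  · intro hu
    obtain ⟨p, hp, rfl⟩ := SSet.SimplexPoint.exists_isNormal_toRealization_eq u
    have hfix (h : H) : (K.ρ (h : G)).app _ p.simplex = p.simplex :=
      SSet.app_eq_of_toTop_map_eq _ (𝟙 _) hp ((hu h).trans (by simp))
    exact ⟨(fixedSSet K H).simplexMap (n := p.dim) ⟨p.simplex, hfix⟩ p.point,
      SSet.toTop_map_simplexMap _ _ _⟩

theorem realization_fixedSSet_homeomorph_fixed_realization_general
    (K : Action SSet (MonCat.of G)) (H : Subgroup G) :
    Nonempty ((SSet.toTop.obj (fixedSSet K H)) ≃ₜ fixedRealization K H) :=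
  ⟨(SSet.isClosedEmbedding_toTop_map (fixedSSet.ι K H)).isEmbedding.toHomeomorph.trans
    (Homeomorph.setCongr (range_toTop_map_fixedSSet_ι K H))⟩

/-- For a finite group `G` acting on a simplicial set `K` and a
subgroup `H ≤ G`, the geometric realization of the fixed-point simplicial set `K^H`
is homeomorphic to the `H`-fixed points of the geometric realization `|K|`. -/
theorem realization_fixedSSet_homeomorph_fixed_realization
    [Finite G] (K : Action SSet (MonCat.of G)) (H : Subgroup G) :
    Nonempty ((SSet.toTop.obj (fixedSSet K H)) ≃ₜ fixedRealization K H) :=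
  realization_fixedSSet_homeomorph_fixed_realization_general K H
end
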